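/- arXiv:1712.06996 — 2 statements merged into one kernel-verified Lean document; each statement's English description precedes it below -/
import Mathlib

section
/- If for each pair (v, l) with v a vertex and l in {1,...,k} one applies the rounding procedure R independently per vertex to the scaled values min{2 x*_{v,l}, 1}, then whenever the fractional solution satisfies sum_l x*_{u,l} + sum_l x*_{v,l} >= 1 for an edge (u,v), with probability 1 at least one of the rounded variables y_{u,l} or y_{v,l} equals 1, and E[sum_{v,l} c_{v,l} y_{v,l}] <= 2 sum_{v,l} c_{v,l} x*_{v,l}. -/
open MeasureTheory Finset

lemma sum_min_ge {k : ℕ} (x : Fin k → ℝ) (hx : ∀ l, 0 ≤ x l)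
    (h : (1:ℝ)/2 ≤ ∑ l, x l) : 1 ≤ ∑ l, min (2 * x l) 1 := by
  by_cases h1 : ∃ l, (1:ℝ) ≤ 2 * x l
  · obtain ⟨l, hl⟩ := h1
    have : min (2 * x l) 1 = 1 := min_eq_right hl
    calc (1:ℝ) = min (2 * x l) 1 := this.symm
      _ ≤ ∑ l, min (2 * x l) 1 := by
        have hnn : ∀ i ∈ Finset.univ, (0:ℝ) ≤ min (2 * x i) 1 := by
          intro i _; have := hx i; positivity
        exact Finset.single_le_sum hnn (Finset.mem_univ l)
  · push_neg at h1
    have : ∀ l, min (2 * x l) 1 = 2 * x l := fun l => min_eq_left (le_of_lt (h1 l))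
    simp only [this]
    rw [← Finset.mul_sum]
    linarith

/-- Applying the rounding procedure `R` (with properties (P2) and (P3)) independently per
vertex to the scaled values `min (2 * x v l) 1`: every edge whose fractional values sum to
at least `1` is covered with probability one, and the expected rounded cost is at most twice
the fractional cost. -/
theorem stmt_3 {Ω V : Type*} [MeasurableSpace Ω] [Fintype V]
    (μ : Measure Ω) [IsProbabilityMeasure μ]
    (k : ℕ) (E : Set (V × V))
    (x : V → Fin k → ℝ) (hx : ∀ v l, 0 ≤ x v l)
    (c : V → Fin k → ℝ) (hc : ∀ v l, 0 ≤ c v l)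
    (Y : V → Fin k → Ω → ℝ)
    (hY01 : ∀ v l ω, Y v l ω = 0 ∨ Y v l ω = 1)
    (hInt : ∀ v l, Integrable (Y v l) μ)
    (hP2 : ∀ v l, (∫ ω, Y v l ω ∂μ) ≤ min (2 * x v l) 1)
    (hP3 : ∀ v, 1 ≤ ∑ l, min (2 * x v l) 1 → ∀ ω, ∃ l, Y v l ω = 1)
    (hfrac : ∀ e ∈ E, 1 ≤ (∑ l, x e.1 l) + ∑ l, x e.2 l) :
    (∀ e ∈ E, μ {ω | (∃ l, Y e.1 l ω = 1) ∨ (∃ l, Y e.2 l ω = 1)} = 1) ∧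
    (∫ ω, ∑ v, ∑ l, c v l * Y v l ω ∂μ) ≤ 2 * ∑ v, ∑ l, c v l * x v l := by
  constructor
  · intro e he
    have hsum := hfrac e he
    have hcover : ∀ ω, (∃ l, Y e.1 l ω = 1) ∨ (∃ l, Y e.2 l ω = 1) := by
      intro ω
      by_cases h1 : (1:ℝ)/2 ≤ ∑ l, x e.1 l
      · exact Or.inl (hP3 e.1 (sum_min_ge _ (hx e.1) h1) ω)
      · have h2 : (1:ℝ)/2 ≤ ∑ l, x e.2 l := by linarith
        exact Or.inr (hP3 e.2 (sum_min_ge _ (hx e.2) h2) ω)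
    have : {ω | (∃ l, Y e.1 l ω = 1) ∨ (∃ l, Y e.2 l ω = 1)} = Set.univ :=
      Set.eq_univ_iff_forall.mpr hcover
    rw [this]
    exact measure_univ
  · have hIntc : ∀ v l, Integrable (fun ω => c v l * Y v l ω) μ :=
      fun v l => (hInt v l).const_mul _
    rw [integral_finset_sum _ (fun v _ => integrable_finset_sum _ (fun l _ => hIntc v l))]
    have step : ∀ v, (∫ ω, ∑ l, c v l * Y v l ω ∂μ) ≤ ∑ l, c v l * (2 * x v l) := by
      intro v
      rw [integral_finset_sum _ (fun l _ => hIntc v l)]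
      apply Finset.sum_le_sum
      intro l _
      rw [integral_const_mul]
      have h1 : (∫ ω, Y v l ω ∂μ) ≤ 2 * x v l :=
        (hP2 v l).trans (min_le_left _ _)
      exact mul_le_mul_of_nonneg_left h1 (hc v l)
    calc (∑ v, ∫ ω, ∑ l, c v l * Y v l ω ∂μ) ≤ ∑ v, ∑ l, c v l * (2 * x v l) :=
          Finset.sum_le_sum (fun v _ => step v)
      _ = 2 * ∑ v, ∑ l, c v l * x v l := by
          rw [Finset.mul_sum]; congr 1; ext v; rw [Finset.mul_sum]; congr 1; ext l; ring
end

section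
/- In the LP-rounding algorithm of Section 3.3, for every client-scenario pair (j, A) there exists, with probability 1, an open facility i with c_{ij} <= 3 * R_{(j,A)}, where R_{(j,A)} is the cluster radius of the pair. -/
/-- The 3-hop clustering lemma: client-scenario pairs `p` have facility sets `F p` of
radius `R p` (every `i ∈ F p` satisfies `c i p ≤ R p`); distances satisfy the triangle
inequality through clients; clusters are the sets `F q` for `q ∈ Cl`, and by the greedy
construction every pair `p` meets some cluster `F q` with `R q ≤ R p`; exactly one facility
is opened in each cluster. Then, with probability 1, every pair `p` has an open facility
`i` with `c i p ≤ 3 * R p`. -/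
theorem stmt_12 {ι P : Type*} [DecidableEq ι]
    (c : ι → P → ℝ)
    (htri : ∀ (i i' : ι) (p q : P), c i p ≤ c i q + c i' q + c i' p)
    (F : P → Finset ι) (hne : ∀ p, (F p).Nonempty)
    (R : P → ℝ) (hR : ∀ p, ∀ i ∈ F p, c i p ≤ R p)
    (Cl : Set P)
    (hgreedy : ∀ p : P, ∃ q ∈ Cl, R q ≤ R p ∧ ((F q) ∩ (F p)).Nonempty)
    (opened : ι → Prop)
    (hopen : ∀ q ∈ Cl, ∃ i ∈ F q, opened i) :
    ∀ p : P, ∃ i, opened i ∧ c i p ≤ 3 * R p := by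
  intro p
  obtain ⟨q, hq, hRq, i', hi'⟩ := hgreedy p
  rw [Finset.mem_inter] at hi'
  obtain ⟨i, hiq, hio⟩ := hopen q hq
  refine ⟨i, hio, ?_⟩
  have h1 := hR q i hiq
  have h2 := hR q i' hi'.1
  have h3 := hR p i' hi'.2
  have := htri i i' p q
  linarith
end
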